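/- If (Bₖ) satisfies the recursion Bₖ = (−1/(Ω₁² − ((k+1)ω)²))·(B²_{ν−1}·δ_{k,2ν−1} + 2∑_{i+j=k−1, i>j} BᵢBⱼ) and the series x̂(t) = ∑_{k≥1} ε^{k−1}B_{k−1}exp(ikωt) converges absolutely together with its termwise first and second derivatives, then x̂ satisfies x̂'' + Ω₁²x̂ + ε·x̂² = F·exp(iωt), where B₀ = F/(Ω₁² − ω²). -/

import Mathlib

open Complex Finset

/-!
Substituting the series termwise, the harmonic `e^{i(k+1)ωt}` of `x̂'' + Ω₁² x̂` has
coefficient `(Ω₁² - ((k+1)ω)²) ε^k B_k`, while by the Cauchy product the same harmonic of `ε x̂²`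
has coefficient `ε^k ∑_{i+j=k-1} B_i B_j`. Splitting this sum into its diagonal term and twice the
terms with `i > j` shows that the recursion says exactly that the two cancel for `k ≥ 1`; the
remaining harmonic `k = 0` is `(Ω₁² - ω²) B₀ e^{iωt} = F e^{iωt}`. No denominator vanishes,
because `Ω₁²` has imaginary part `ω₁² μ ≠ 0` and so is not the square of a real number.
-/

theorem sum_antidiagonal_mul_eq_diag_add_two_mul {R : Type*} [CommSemiring R] (f : ℕ → R) (n : ℕ) :
    ∑ p ∈ antidiagonal n, f p.1 * f p.2 =
      (if Even n then f (n / 2) ^ 2 else 0) +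
        2 * ∑ p ∈ (antidiagonal n).filter (fun p => p.2 < p.1), f p.1 * f p.2 := by
  have hswap : ∑ p ∈ (antidiagonal n).filter (fun p => p.1 < p.2), f p.1 * f p.2 =
      ∑ p ∈ (antidiagonal n).filter (fun p => p.2 < p.1), f p.1 * f p.2 :=
    sum_equiv (Equiv.prodComm ℕ ℕ) (by simp [add_comm]) (by simp [mul_comm])
  have hdiag : ∑ p ∈ (antidiagonal n).filter (fun p => p.1 = p.2), f p.1 * f p.2 =
      if Even n then f (n / 2) ^ 2 else 0 := by
    split_ifs with hn
    · obtain ⟨m, rfl⟩ := hn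
      rw [show (antidiagonal (m + m)).filter (fun p => p.1 = p.2) = {(m, m)} by
        ext ⟨i, j⟩; simp; omega]
      simp [sq, ← two_mul]
    · refine sum_eq_zero fun p hp => absurd ⟨p.1, ?_⟩ hn
      simp only [mem_filter, HasAntidiagonal.mem_antidiagonal] at hp
      omega
  have hrest : ∑ p ∈ (antidiagonal n).filter (fun p => ¬ p.2 < p.1), f p.1 * f p.2 =
      ∑ p ∈ (antidiagonal n).filter (fun p => p.1 < p.2), f p.1 * f p.2 +
        ∑ p ∈ (antidiagonal n).filter (fun p => p.1 = p.2), f p.1 * f p.2 := by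
    rw [← sum_filter_add_sum_filter_not _ (fun p => p.1 < p.2), filter_filter, filter_filter]
    congr 2 <;> refine filter_congr fun p _ => ?_ <;> omega
  rw [← sum_filter_add_sum_filter_not _ (fun p => p.2 < p.1), hrest, hswap, hdiag]
  ring

theorem sum_antidiagonal_pow_mul_mul_pow_mul {R : Type*} [CommSemiring R] (c : R) (f g : ℕ → R)
    (n : ℕ) :
    ∑ p ∈ antidiagonal n, c ^ p.1 * f p.1 * (c ^ p.2 * g p.2) =
      c ^ n * ∑ p ∈ antidiagonal n, f p.1 * g p.2 := by
  rw [mul_sum]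
  refine sum_congr rfl fun p hp => ?_
  rw [← HasAntidiagonal.mem_antidiagonal.mp hp, pow_add]
  ring

theorem sub_ofReal_sq_ne_zero_of_im_ne_zero {z : ℂ} (hz : z.im ≠ 0) (x : ℝ) :
    z - (x : ℂ) ^ 2 ≠ 0 := by
  intro h
  apply hz
  simpa [← ofReal_pow] using congrArg im h

section ExpSeries

variable {a : ℕ → ℂ} {ξ : ℕ → ℝ}

theorem hasDerivAt_tsum_mul_exp (ha : Summable fun k => ‖a k‖)
    (hξa : Summable fun k => ξ k * ‖a k‖) (t : ℝ) :
    HasDerivAt (fun s : ℝ => ∑' k, a k * exp (↑(ξ k * s) * I))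
      (∑' k, ξ k * I * a k * exp (↑(ξ k * t) * I)) t := by
  have hterm (k : ℕ) (s : ℝ) :
      HasDerivAt (fun s : ℝ => a k * exp (↑(ξ k * s) * I))
        (ξ k * I * a k * exp (↑(ξ k * s) * I)) s := by
    refine ((((hasDerivAt_id' s).const_mul (ξ k)).ofReal_comp.mul_const I).cexp.const_mul
      (a k)).congr_deriv ?_
    push_cast
    ring
  refine hasDerivAt_tsum (y₀ := 0) (summable_abs_iff.mpr hξa) hterm (fun k s => ?_) ?_ t
  · rw [norm_mul, norm_exp_ofReal_mul_I, mul_one, norm_mul, norm_mul, norm_I, mul_one, norm_real,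
      Real.norm_eq_abs, abs_mul, abs_norm]
  · exact ha.of_norm.congr fun k => by simp

theorem deriv_deriv_tsum_mul_exp (ha : Summable fun k => ‖a k‖)
    (hξa : Summable fun k => ξ k * ‖a k‖) (hξ2a : Summable fun k => ξ k ^ 2 * ‖a k‖) (t : ℝ) :
    deriv (deriv fun s : ℝ => ∑' k, a k * exp (↑(ξ k * s) * I)) t =
      ∑' k, -(ξ k : ℂ) ^ 2 * a k * exp (↑(ξ k * t) * I) := by
  have hnorm (k : ℕ) : ‖(ξ k : ℂ) * I * a k‖ = |ξ k| * ‖a k‖ := by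
    rw [norm_mul, norm_mul, norm_I, mul_one, norm_real, Real.norm_eq_abs]
  have h1 : Summable fun k => ‖(ξ k : ℂ) * I * a k‖ :=
    (summable_abs_iff.mpr hξa).congr fun k => by rw [hnorm, abs_mul, abs_norm]
  have h2 : Summable fun k => ξ k * ‖(ξ k : ℂ) * I * a k‖ :=
    Summable.of_norm <| hξ2a.congr fun k => by
      rw [hnorm, Real.norm_eq_abs, abs_mul, abs_mul, abs_abs, abs_norm, ← mul_assoc,
        abs_mul_abs_self, sq]
  rw [funext fun s => (hasDerivAt_tsum_mul_exp ha hξa s).deriv,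
    (hasDerivAt_tsum_mul_exp (a := fun k => ξ k * I * a k) h1 h2 t).deriv]
  exact tsum_congr fun k => by linear_combination (ξ k ^ 2 * a k * exp (↑(ξ k * t) * I)) * I_sq

end ExpSeries

noncomputable def harmonicSeries (b : ℕ → ℂ) (ω t : ℝ) : ℂ :=
  ∑' k, b k * exp (↑(((k : ℝ) + 1) * ω * t) * I)

theorem harmonicSeries_sq {b : ℕ → ℂ} (hb : Summable fun k => ‖b k‖) (ω t : ℝ) :
    harmonicSeries b ω t ^ 2 =
      ∑' n, (∑ p ∈ antidiagonal n, b p.1 * b p.2) * exp (↑(((n : ℝ) + 2) * ω * t) * I) := by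
  have hnorm : Summable fun k => ‖b k * exp (↑(((k : ℝ) + 1) * ω * t) * I)‖ :=
    hb.congr fun k => by rw [norm_mul, norm_exp_ofReal_mul_I, mul_one]
  rw [harmonicSeries, sq, tsum_mul_tsum_eq_tsum_sum_antidiagonal_of_summable_norm hnorm hnorm]
  refine tsum_congr fun n => ?_
  rw [sum_mul]
  refine sum_congr rfl fun p hp => ?_
  rw [HasAntidiagonal.mem_antidiagonal] at hp
  rw [mul_mul_mul_comm, ← exp_add, ← hp]
  congr 2
  push_cast
  ring

theorem harmonicSeries_balance {Ω ε : ℂ} {ω : ℝ} {b : ℕ → ℂ} (hb : Summable fun k => ‖b k‖)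
    (hb₁ : Summable fun k : ℕ => ((k : ℝ) + 1) * ω * ‖b k‖)
    (hb₂ : Summable fun k : ℕ => (((k : ℝ) + 1) * ω) ^ 2 * ‖b k‖)
    (hcoef : ∀ n : ℕ, (Ω - (((n : ℂ) + 2) * ω) ^ 2) * b (n + 1) =
      -(ε * ∑ p ∈ antidiagonal n, b p.1 * b p.2))
    (t : ℝ) :
    deriv (deriv (harmonicSeries b ω)) t + Ω * harmonicSeries b ω t +
        ε * harmonicSeries b ω t ^ 2 =
      (Ω - (ω : ℂ) ^ 2) * b 0 * exp (↑(ω * t) * I) := by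
  set e : ℕ → ℂ := fun k => exp (↑(((k : ℝ) + 1) * ω * t) * I) with he
  have hbe : Summable fun k => b k * e k :=
    Summable.of_norm <| hb.congr fun k => by rw [norm_mul, norm_exp_ofReal_mul_I, mul_one]
  have hξbe : Summable fun k : ℕ => -(((k : ℝ) + 1) * ω : ℝ) ^ 2 * b k * e k := by
    refine Summable.of_norm <| hb₂.congr fun k => ?_
    rw [norm_mul, norm_mul, norm_exp_ofReal_mul_I, mul_one, norm_neg, norm_pow, norm_real,
      Real.norm_eq_abs, sq_abs]
  have hx'' : deriv (deriv (harmonicSeries b ω)) t =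
      ∑' k : ℕ, -(((k : ℝ) + 1) * ω : ℝ) ^ 2 * b k * e k :=
    deriv_deriv_tsum_mul_exp (ξ := fun k => ((k : ℝ) + 1) * ω) hb hb₁ hb₂ t
  have hlin : deriv (deriv (harmonicSeries b ω)) t + Ω * harmonicSeries b ω t =
      (Ω - (ω : ℂ) ^ 2) * b 0 * e 0 +
        ∑' n : ℕ, (Ω - (((n : ℂ) + 2) * ω) ^ 2) * b (n + 1) * e (n + 1) := by
    rw [hx'', show harmonicSeries b ω t = ∑' k, b k * e k from rfl, ← tsum_mul_left,
      ← hξbe.tsum_add (hbe.mul_left Ω), (hξbe.add (hbe.mul_left Ω)).tsum_eq_zero_add]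
    congr 1
    · push_cast; ring
    · exact tsum_congr fun n => by push_cast; ring
  have hcancel (n : ℕ) : (Ω - (((n : ℂ) + 2) * ω) ^ 2) * b (n + 1) * e (n + 1) =
      -(ε * ((∑ p ∈ antidiagonal n, b p.1 * b p.2) * exp (↑(((n : ℝ) + 2) * ω * t) * I))) := by
    rw [hcoef, he]
    push_cast
    ring_nf
  rw [hlin, harmonicSeries_sq hb, tsum_congr hcancel, tsum_neg, tsum_mul_left, he]
  push_cast
  ring_nf

theorem sub_sq_mul_succ_eq_neg_sum_antidiagonal {Ω : ℂ} {ω : ℝ} {B : ℕ → ℂ}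
    (hrec : ∀ k : ℕ, 1 ≤ k →
      B k = (-1 / (Ω - (((k : ℂ) + 1) * ω) ^ 2)) *
        ((if Odd k then (B ((k - 1) / 2)) ^ 2 else 0) +
          2 * ∑ p ∈ (antidiagonal (k - 1)).filter (fun p => p.2 < p.1), B p.1 * B p.2))
    (n : ℕ) (hn : Ω - (((n : ℂ) + 2) * ω) ^ 2 ≠ 0) :
    (Ω - (((n : ℂ) + 2) * ω) ^ 2) * B (n + 1) = -∑ p ∈ antidiagonal n, B p.1 * B p.2 := by
  rw [hrec (n + 1) le_add_self, Nat.add_sub_cancel, sum_antidiagonal_mul_eq_diag_add_two_mul]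
  simp only [Nat.odd_add_one, Nat.not_odd_iff_even]
  push_cast
  rw [show (n : ℂ) + 1 + 1 = n + 2 by ring, ← mul_assoc, mul_div_cancel₀ _ hn, neg_one_mul]

theorem stmt_11 (μ ω₁ ω ε F : ℝ) (hμ : μ ≠ 0) (hω₁ : ω₁ ≠ 0)
    (Ω₁sq : ℂ) (hΩ : Ω₁sq = (ω₁ : ℂ) ^ 2 * (1 + Complex.I * μ))
    (B : ℕ → ℂ)
    (hB₀ : B 0 = (F : ℂ) / (Ω₁sq - (ω : ℂ) ^ 2))
    (hrec : ∀ k : ℕ, 1 ≤ k →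
      B k = (-1 / (Ω₁sq - (((k : ℂ) + 1) * ω) ^ 2)) *
        ((if Odd k then (B ((k - 1) / 2)) ^ 2 else 0) +
          2 * ∑ p ∈ (Finset.HasAntidiagonal.antidiagonal (k - 1)).filter (fun p => p.2 < p.1),
            B p.1 * B p.2))
    (xhat : ℝ → ℂ)
    (hxhat : ∀ t : ℝ, xhat t =
      ∑' k : ℕ, (ε : ℂ) ^ k * B k * Complex.exp (((k : ℂ) + 1) * Complex.I * ω * t))
    (hs0 : Summable (fun k : ℕ => ‖(ε : ℂ) ^ k * B k‖))
    (hs1 : Summable (fun k : ℕ => (((k : ℝ) + 1) * ω) * ‖(ε : ℂ) ^ k * B k‖))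
    (hs2 : Summable (fun k : ℕ => (((k : ℝ) + 1) * ω) ^ 2 * ‖(ε : ℂ) ^ k * B k‖)) :
    ∀ t : ℝ, deriv (deriv xhat) t + Ω₁sq * xhat t + (ε : ℂ) * (xhat t) ^ 2 =
      (F : ℂ) * Complex.exp (Complex.I * ω * t) := by
  have hne (x : ℝ) : Ω₁sq - (x : ℂ) ^ 2 ≠ 0 := by
    refine sub_ofReal_sq_ne_zero_of_im_ne_zero ?_ x
    rw [hΩ, ← ofReal_pow, im_ofReal_mul]
    simpa using And.intro hω₁ hμ
  have hx : xhat = harmonicSeries (fun k => (ε : ℂ) ^ k * B k) ω := by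
    funext t
    rw [hxhat, harmonicSeries]
    exact tsum_congr fun k => by push_cast; ring_nf
  have hcoef (n : ℕ) : (Ω₁sq - (((n : ℂ) + 2) * ω) ^ 2) * ((ε : ℂ) ^ (n + 1) * B (n + 1)) =
      -(ε * ∑ p ∈ antidiagonal n, (ε : ℂ) ^ p.1 * B p.1 * ((ε : ℂ) ^ p.2 * B p.2)) := by
    have hB := sub_sq_mul_succ_eq_neg_sum_antidiagonal hrec n (by exact_mod_cast hne ((n + 2) * ω))
    rw [sum_antidiagonal_pow_mul_mul_pow_mul]
    linear_combination (ε : ℂ) ^ (n + 1) * hB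
  intro t
  rw [hx, harmonicSeries_balance hs0 hs1 hs2 hcoef t, hB₀, pow_zero, one_mul,
    mul_div_cancel₀ _ (hne ω)]
  congr 2
  push_cast
  ring
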